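/- arXiv:0903.1361 — 7 statements merged into one kernel-verified Lean document; each statement's English description precedes it below -/
import Mathlib

section
/- For probability measures P and Q on the reals, P is stochastically smaller than Q (i.e., P([x,∞)) ≤ Q([x,∞)) for all real x) if and only if there exist real-valued random variables X and Y on a common probability space with distributions P and Q respectively such that X ≤ Y almost surely. -/
open MeasureTheory Set

/-!
If `P ≤_st Q` then `cdf Q ≤ cdf P`, so the quantile functions satisfy `F_P⁻¹ ≤ F_Q⁻¹` on `(0, 1)`;
evaluating both at one uniform variable `U` on `(0, 1)` gives the coupling, since `F⁻¹(U)` has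
distribution `F` by the Galois connection `F⁻¹(t) ≤ x ↔ t ≤ F(x)`. Conversely, `X ≤ Y` a.s. makes
`{X ≥ x}` a.e. contained in `{Y ≥ x}`.
-/

open ProbabilityTheory

theorem measure_Ioi_le_of_forall_measure_Ici_le {α : Type*} [ConditionallyCompleteLinearOrder α]
    [TopologicalSpace α] [OrderTopology α] [DenselyOrdered α] [NoMaxOrder α]
    [FirstCountableTopology α] [MeasurableSpace α] {μ ν : Measure α}
    (h : ∀ y, μ (Ici y) ≤ ν (Ici y)) (x : α) : μ (Ioi x) ≤ ν (Ioi x) := by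
  obtain ⟨u, hu_anti, hu_gt, hu_lim⟩ := exists_seq_strictAnti_tendsto x
  have hmono : Monotone fun n ↦ Ici (u n) := fun m n hmn ↦ Ici_subset_Ici.2 (hu_anti.antitone hmn)
  rw [← iUnion_Ici_eq_Ioi_of_lt_of_tendsto hu_gt hu_lim, hmono.measure_iUnion, hmono.measure_iUnion]
  exact iSup_mono fun n ↦ h (u n)

theorem cdf_le_cdf_of_measure_Ioi_le {μ ν : Measure ℝ} [IsProbabilityMeasure μ]
    [IsProbabilityMeasure ν] {x : ℝ} (h : μ (Ioi x) ≤ ν (Ioi x)) : cdf ν x ≤ cdf μ x := by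
  rw [cdf_eq_real, cdf_eq_real, ← compl_Ioi, probReal_compl_eq_one_sub measurableSet_Ioi,
    probReal_compl_eq_one_sub measurableSet_Ioi]
  exact sub_le_sub_left (ENNReal.toReal_mono (measure_ne_top ν _) h) 1

/-- The left-continuous inverse of `cdf μ`; it is only meaningful on `(0, 1)` (outside, `sInf`
returns the junk value `0`). -/
noncomputable def quantile (μ : Measure ℝ) (t : ℝ) : ℝ := sInf {x | t ≤ cdf μ x}

theorem nonempty_setOf_le_cdf (μ : Measure ℝ) {t : ℝ} (ht : t < 1) : {x | t ≤ cdf μ x}.Nonempty :=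
  ((tendsto_cdf_atTop μ).eventually_const_le ht).exists

theorem bddBelow_setOf_le_cdf (μ : Measure ℝ) {t : ℝ} (ht : 0 < t) :
    BddBelow {x | t ≤ cdf μ x} := by
  obtain ⟨y, hy⟩ := ((tendsto_cdf_atBot μ).eventually_lt_const ht).exists_forall_of_atBot
  exact ⟨y, fun z hz ↦ le_of_not_gt fun hzy ↦ (hy z hzy.le).not_ge hz⟩

theorem quantile_le_iff (μ : Measure ℝ) {t : ℝ} (ht : t ∈ Ioo 0 1) (x : ℝ) :
    quantile μ t ≤ x ↔ t ≤ cdf μ x := by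
  refine ⟨fun h ↦ ?_, fun h ↦ csInf_le (bddBelow_setOf_le_cdf μ ht.1) h⟩
  rw [← (cdf μ).iInf_Ioi_eq x]
  refine le_ciInf fun ⟨y, hy⟩ ↦ ?_
  obtain ⟨z, hz, hzy⟩ := exists_lt_of_csInf_lt (nonempty_setOf_le_cdf μ ht.2) (h.trans_lt hy)
  exact hz.trans (monotone_cdf μ hzy.le)

theorem le_cdf_quantile (μ : Measure ℝ) {t : ℝ} (ht : t ∈ Ioo 0 1) : t ≤ cdf μ (quantile μ t) :=
  (quantile_le_iff μ ht _).1 le_rfl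

theorem monotoneOn_quantile (μ : Measure ℝ) : MonotoneOn (quantile μ) (Ioo 0 1) :=
  fun _ hs _ ht hst ↦ (quantile_le_iff μ hs _).2 (hst.trans (le_cdf_quantile μ ht))

theorem quantile_le_quantile_of_cdf_le {μ ν : Measure ℝ} (h : ∀ x, cdf ν x ≤ cdf μ x) {t : ℝ}
    (ht : t ∈ Ioo 0 1) : quantile μ t ≤ quantile ν t :=
  (quantile_le_iff μ ht _).2 ((le_cdf_quantile ν ht).trans (h _))

instance : IsProbabilityMeasure (volume.restrict (Ioo (0 : ℝ) 1)) :=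
  ⟨by simp [Real.volume_Ioo]⟩

theorem aemeasurable_quantile (μ : Measure ℝ) :
    AEMeasurable (quantile μ) (volume.restrict (Ioo 0 1)) :=
  aemeasurable_restrict_of_monotoneOn measurableSet_Ioo (monotoneOn_quantile μ)

theorem volume_Iic_inter_Ioo_zero_one {c : ℝ} (hc : c ∈ Icc 0 1) :
    volume (Iic c ∩ Ioo 0 1) = ENNReal.ofReal c := by
  refine le_antisymm ?_ ?_
  · calc volume (Iic c ∩ Ioo 0 1) ≤ volume (Ioc 0 c) :=
          measure_mono fun t ht ↦ ⟨ht.2.1, ht.1⟩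
      _ = ENNReal.ofReal c := by simp
  · calc ENNReal.ofReal c = volume (Ioo 0 c) := by simp
      _ ≤ volume (Iic c ∩ Ioo 0 1) :=
          measure_mono fun t ht ↦ ⟨ht.2.le, ht.1, ht.2.trans_le hc.2⟩

theorem map_quantile (μ : Measure ℝ) [IsProbabilityMeasure μ] :
    (volume.restrict (Ioo 0 1)).map (quantile μ) = μ := by
  refine Measure.ext_of_Iic _ _ fun x ↦ ?_
  have hpre : quantile μ ⁻¹' Iic x ∩ Ioo 0 1 = Iic (cdf μ x) ∩ Ioo 0 1 := by
    ext t
    simp only [mem_inter_iff, mem_preimage, mem_Iic, and_congr_left_iff]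
    exact fun ht ↦ quantile_le_iff μ ht x
  rw [Measure.map_apply_of_aemeasurable (aemeasurable_quantile μ) measurableSet_Iic,
    Measure.restrict_apply' measurableSet_Ioo, hpre,
    volume_Iic_inter_Ioo_zero_one ⟨cdf_nonneg μ x, cdf_le_one μ x⟩, ofReal_cdf]

theorem measure_map_Ici_le_of_ae_le {Ω : Type*} [MeasurableSpace Ω] {μ : Measure Ω}
    {X Y : Ω → ℝ} (hX : Measurable X) (hY : Measurable Y) (hXY : ∀ᵐ ω ∂μ, X ω ≤ Y ω) (x : ℝ) :
    μ.map X (Ici x) ≤ μ.map Y (Ici x) := by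
  rw [Measure.map_apply hX measurableSet_Ici, Measure.map_apply hY measurableSet_Ici]
  exact measure_mono_ae (hXY.mono fun ω hω hx ↦ le_trans hx hω)

theorem stochastic_order_iff_coupling (P Q : Measure ℝ)
    [IsProbabilityMeasure P] [IsProbabilityMeasure Q] :
    (∀ x : ℝ, P (Ici x) ≤ Q (Ici x)) ↔
      ∃ (Ω : Type) (_ : MeasurableSpace Ω) (μ : Measure Ω) (X Y : Ω → ℝ),
        IsProbabilityMeasure μ ∧ Measurable X ∧ Measurable Y ∧
        μ.map X = P ∧ μ.map Y = Q ∧ ∀ᵐ ω ∂μ, X ω ≤ Y ω := by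
  constructor
  · intro h
    have hcdf (x : ℝ) : cdf Q x ≤ cdf P x :=
      cdf_le_cdf_of_measure_Ioi_le (measure_Ioi_le_of_forall_measure_Ici_le h x)
    have hP := aemeasurable_quantile P
    have hQ := aemeasurable_quantile Q
    have hle : ∀ᵐ t ∂volume.restrict (Ioo 0 1), quantile P t ≤ quantile Q t :=
      ae_restrict_of_forall_mem measurableSet_Ioo fun t ↦ quantile_le_quantile_of_cdf_le hcdf
    refine ⟨ℝ, inferInstance, volume.restrict (Ioo 0 1), hP.mk _, hQ.mk _, inferInstance,
      hP.measurable_mk, hQ.measurable_mk, ?_, ?_, ?_⟩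
    · rw [← Measure.map_congr hP.ae_eq_mk, map_quantile]
    · rw [← Measure.map_congr hQ.ae_eq_mk, map_quantile]
    · filter_upwards [hle, hP.ae_eq_mk, hQ.ae_eq_mk] with t ht hPt hQt
      rwa [← hPt, ← hQt]
  · rintro ⟨Ω, _, μ, X, Y, -, hX, hY, rfl, rfl, hXY⟩
    exact measure_map_Ici_le_of_ae_le hX hY hXY
end

section
/- Let P and Q be probability measures on ℝ with likelihood ratio ℓ = (dP/dμ)/(dQ/dμ) with respect to a dominating measure μ. Suppose there exists x₀ ∈ ℝ such that ℓ is monotone on (-∞, x₀] and monotone on [x₀, ∞) (each piece either increasing or decreasing), and lim_{x→-∞} ℓ(x) ≥ 1 and lim_{x→∞} ℓ(x) ≤ 1. Then P is stochastically smaller than Q. -/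
/-!
If `ℓ` is monotone or antitone on each side of `x₀`, tends to `a ≥ 1` at `-∞` and to `b ≤ 1`
at `+∞`, then once `ℓ` has dropped below `1` it can never rise above `1` again. Hence at every
threshold `x`, either `ℓ ≥ 1` on `(-∞, x)`, so that `Q (-∞, x) ≤ P (-∞, x)` and we pass to
complements, or `ℓ ≤ 1` on `[x, ∞)`, so that `P [x, ∞) ≤ Q [x, ∞)` directly.
-/

open MeasureTheory Set Filter Topology
open scoped ENNReal

namespace ENNReal

lemma le_of_one_le_div {a b : ℝ≥0∞} (h : 1 ≤ a / b) : b ≤ a := by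
  contrapose! h
  exact (ENNReal.div_lt_iff (.inl h.ne_bot) (.inr h.ne_top)).2 (by rwa [one_mul])

lemma le_of_div_le_one {a b : ℝ≥0∞} (h : a / b ≤ 1) : a ≤ b := by
  contrapose! h
  exact (ENNReal.lt_div_iff_mul_lt (.inr one_ne_top) (.inr one_ne_zero)).2 (by rwa [one_mul])

end ENNReal

section SingleCrossing

variable {α β : Type*} [LinearOrder α] [TopologicalSpace α] [OrderClosedTopology α]
  [LinearOrder β] {ℓ : β → α} {x₀ u v : β} {a b c : α}

lemma MonotoneOn.le_of_tendsto_atBot (hℓ : MonotoneOn ℓ (Iic x₀))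
    (ha : Tendsto ℓ atBot (𝓝 a)) (hu : u ≤ x₀) : a ≤ ℓ u :=
  have : Nonempty β := ⟨u⟩
  le_of_tendsto ha <| eventually_atBot.2 ⟨u, fun _ ht ↦ hℓ (ht.trans hu) hu ht⟩

lemma MonotoneOn.ge_of_tendsto_atTop (hℓ : MonotoneOn ℓ (Ici x₀))
    (hb : Tendsto ℓ atTop (𝓝 b)) (hv : x₀ ≤ v) : ℓ v ≤ b :=
  have : Nonempty β := ⟨v⟩
  ge_of_tendsto hb <| eventually_atTop.2 ⟨v, fun _ ht ↦ hℓ hv (hv.trans ht) ht⟩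

lemma le_of_le_of_monotoneOn_or_antitoneOn_Iic
    (hℓ : MonotoneOn ℓ (Iic x₀) ∨ AntitoneOn ℓ (Iic x₀)) (ha : Tendsto ℓ atBot (𝓝 a))
    (hca : c ≤ a) (huv : u ≤ v) (hv : v ≤ x₀) (hcv : c ≤ ℓ v) : c ≤ ℓ u := by
  rcases hℓ with hmono | hanti
  · exact hca.trans (hmono.le_of_tendsto_atBot ha (huv.trans hv))
  · exact hcv.trans (hanti (huv.trans hv) hv huv)

lemma le_of_lt_of_monotoneOn_or_antitoneOn_Ici
    (hℓ : MonotoneOn ℓ (Ici x₀) ∨ AntitoneOn ℓ (Ici x₀)) (hb : Tendsto ℓ atTop (𝓝 b))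
    (hbc : b ≤ c) (hu : x₀ ≤ u) (huv : u ≤ v) (hcv : c < ℓ v) : c ≤ ℓ u := by
  rcases hℓ with hmono | hanti
  · exact absurd ((hmono.ge_of_tendsto_atTop hb (hu.trans huv)).trans hbc) hcv.not_ge
  · exact hcv.le.trans (hanti hu (hu.trans huv) huv)

lemma le_of_lt_of_le_of_halfMonotone
    (hleft : MonotoneOn ℓ (Iic x₀) ∨ AntitoneOn ℓ (Iic x₀))
    (hright : MonotoneOn ℓ (Ici x₀) ∨ AntitoneOn ℓ (Ici x₀)) (ha : Tendsto ℓ atBot (𝓝 a))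
    (hca : c ≤ a) (hb : Tendsto ℓ atTop (𝓝 b)) (hbc : b ≤ c) (huv : u ≤ v) (hcv : c < ℓ v) :
    c ≤ ℓ u := by
  rcases le_total v x₀ with hv | hv
  · exact le_of_le_of_monotoneOn_or_antitoneOn_Iic hleft ha hca huv hv hcv.le
  rcases le_total x₀ u with hu | hu
  · exact le_of_lt_of_monotoneOn_or_antitoneOn_Ici hright hb hbc hu huv hcv
  · exact le_of_le_of_monotoneOn_or_antitoneOn_Iic hleft ha hca hu le_rfl
      (le_of_lt_of_monotoneOn_or_antitoneOn_Ici hright hb hbc le_rfl hv hcv)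

lemma forall_lt_le_or_forall_ge_le_of_halfMonotone
    (hleft : MonotoneOn ℓ (Iic x₀) ∨ AntitoneOn ℓ (Iic x₀))
    (hright : MonotoneOn ℓ (Ici x₀) ∨ AntitoneOn ℓ (Ici x₀)) (ha : Tendsto ℓ atBot (𝓝 a))
    (hca : c ≤ a) (hb : Tendsto ℓ atTop (𝓝 b)) (hbc : b ≤ c) (x : β) :
    (∀ u < x, c ≤ ℓ u) ∨ ∀ v, x ≤ v → ℓ v ≤ c := by
  by_contra! h
  obtain ⟨⟨u, hux, hu⟩, v, hxv, hv⟩ := h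
  exact hu.not_ge
    (le_of_lt_of_le_of_halfMonotone hleft hright ha hca hb hbc (hux.le.trans hxv) hv)

end SingleCrossing

lemma withDensity_apply_le_of_forall_mem_le {X : Type*} [MeasurableSpace X] {μ : Measure X}
    {f g : X → ℝ≥0∞} {s : Set X} (hs : MeasurableSet s) (hfg : ∀ x ∈ s, f x ≤ g x) :
    μ.withDensity f s ≤ μ.withDensity g s := by
  rw [withDensity_apply _ hs, withDensity_apply _ hs]
  exact setLIntegral_mono' hs hfg

lemma prob_compl_le_prob_compl {X : Type*} [MeasurableSpace X] {P Q : Measure X}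
    [IsProbabilityMeasure P] [IsProbabilityMeasure Q] {s : Set X} (hs : MeasurableSet s)
    (hQP : Q s ≤ P s) : P sᶜ ≤ Q sᶜ := by
  rw [prob_compl_eq_one_sub hs, prob_compl_eq_one_sub hs]
  exact tsub_le_tsub_left hQP 1

/-- Half-monotone likelihood ratio with tail conditions implies stochastic order.
`P = f·μ`, `Q = g·μ`, and `ℓ = f/g` (with the `ℝ≥0∞` convention `a/0 = ∞` for `a ≠ 0`). -/
theorem half_monotone_likelihood_ratio_implies_st
    (μ : Measure ℝ) (f g : ℝ → ENNReal)
    (P Q : Measure ℝ) [IsProbabilityMeasure P] [IsProbabilityMeasure Q]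
    (hP : P = μ.withDensity f) (hQ : Q = μ.withDensity g)
    (ℓ : ℝ → ENNReal) (hℓ : ∀ x, ℓ x = f x / g x)
    (x₀ : ℝ)
    (hleft : MonotoneOn ℓ (Iic x₀) ∨ AntitoneOn ℓ (Iic x₀))
    (hright : MonotoneOn ℓ (Ici x₀) ∨ AntitoneOn ℓ (Ici x₀))
    (a b : ENNReal)
    (ha : Tendsto ℓ atBot (nhds a)) (ha1 : 1 ≤ a)
    (hb : Tendsto ℓ atTop (nhds b)) (hb1 : b ≤ 1) :
    ∀ x : ℝ, P (Ici x) ≤ Q (Ici x) := by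
  intro x
  subst hP hQ
  rcases forall_lt_le_or_forall_ge_le_of_halfMonotone hleft hright ha ha1 hb hb1 x
    with hbelow | habove
  · rw [← compl_Iio]
    refine prob_compl_le_prob_compl measurableSet_Iio
      (withDensity_apply_le_of_forall_mem_le measurableSet_Iio fun y hy ↦ ?_)
    exact ENNReal.le_of_one_le_div (hℓ y ▸ hbelow y hy)
  · exact withDensity_apply_le_of_forall_mem_le measurableSet_Ici fun y hy ↦
      ENNReal.le_of_div_le_one (hℓ y ▸ habove y hy)
end

section
/- For n₁ ≤ n₂ in ℕ and p₁, p₂ ∈ (0,1), if (1-p₁)^{n₁} ≥ (1-p₂)^{n₂}, then the binomial distribution b_{n₁,p₁} is stochastically smaller than b_{n₂,p₂}. -/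
/-!
On `{0, …, n₁}` the likelihood ratio `r j = b_{n₂,p₂}(j) / b_{n₁,p₁}(j)` satisfies
`r (j+1) = r j * c * (n₂ - j) / (n₁ - j)` with `c > 0` the odds ratio. Since `n₁ ≤ n₂` these
step factors increase with `j`, so once `r` has gone up it keeps going up. The hypothesis is
`r 0 ≤ 1`, hence once `r` exceeds `1` it stays above `1`: the two weights cross at most once,
from `b_{n₁,p₁} ≥ b_{n₂,p₂}` to `b_{n₁,p₁} ≤ b_{n₂,p₂}`. For two distributions of equal mass,
such a single crossing yields the comparison of all upper tails.
-/

/-- The binomial weight `b_{n,p}({k}) = C(n,k) p^k (1-p)^{n-k}`. -/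
noncomputable def binomPMF (n : ℕ) (p : ℝ) (k : ℕ) : ℝ :=
  (n.choose k : ℝ) * p ^ k * (1 - p) ^ (n - k)

open Finset

theorem sum_tail_le_of_single_crossing {ι M : Type*} [LinearOrder ι] [AddCommMonoid M]
    [LinearOrder M] [IsOrderedCancelAddMonoid M] {s : Finset ι} {f g : ι → M}
    (htotal : ∑ j ∈ s, f j = ∑ j ∈ s, g j)
    (hcross : ∀ i j, i ≤ j → f i < g i → f j ≤ g j) (k : ι) :
    ∑ j ∈ s with k ≤ j, f j ≤ ∑ j ∈ s with k ≤ j, g j := by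
  by_cases htail : ∀ j ∈ s, k ≤ j → f j ≤ g j
  · exact sum_le_sum fun j hj => htail j (mem_filter.1 hj).1 (mem_filter.1 hj).2
  push Not at htail
  obtain ⟨j, -, hkj, hgf⟩ := htail
  have hhead : ∑ i ∈ s with ¬k ≤ i, g i ≤ ∑ i ∈ s with ¬k ≤ i, f i :=
    sum_le_sum fun i hi => not_lt.1 fun hfg =>
      (hcross i j ((not_le.1 (mem_filter.1 hi).2).le.trans hkj) hfg).not_gt hgf
  rw [← sum_filter_add_sum_filter_not s (k ≤ ·) f,
    ← sum_filter_add_sum_filter_not s (k ≤ ·) g] at htotal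
  exact le_of_add_le_add_right (htotal.trans_le (add_le_add le_rfl hhead))

theorem le_of_apply_zero_lt_of_monotoneOn_ratio {r ρ : ℕ → ℝ} {N : ℕ}
    (hpos : ∀ l < N, 0 < r l) (hrec : ∀ l < N, r (l + 1) = r l * ρ l)
    (hρ : MonotoneOn ρ (Set.Iio N)) {i j : ℕ} (h0 : r 0 < r i) (hij : i ≤ j) (hjN : j ≤ N) :
    r i ≤ r j := by
  obtain ⟨m, hmi, hm⟩ : ∃ m < i, r m < r (m + 1) := by
    by_contra! hdown
    have : ∀ l ≤ i, r l ≤ r 0 := by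
      intro l hl
      induction l with
      | zero => exact le_rfl
      | succ l ih => exact (hdown l hl).trans (ih (by omega))
    exact (this i le_rfl).not_gt h0
  have hmN : m < N := by omega
  have hρm : 1 < ρ m := by
    rw [hrec m hmN] at hm
    exact (lt_mul_iff_one_lt_right (hpos m hmN)).1 hm
  have hup : ∀ l, m ≤ l → l < N → r l ≤ r (l + 1) := fun l hml hlN => by
    rw [hrec l hlN]
    exact le_mul_of_one_le_right (hpos l hlN).le (hρm.le.trans (hρ hmN hlN hml))
  induction j, hij using Nat.le_induction with
  | base => exact le_rfl
  | succ j hij ih => exact (ih (by omega)).trans (hup j (by omega) (by omega))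

theorem monotoneOn_sub_div_sub {a b : ℝ} (hab : a ≤ b) :
    MonotoneOn (fun x => (b - x) / (a - x)) (Set.Iio a) := by
  intro x hx y hy hxy
  simp only [Set.mem_Iio] at hx hy
  rw [div_le_div_iff₀ (by linarith) (by linarith)]
  nlinarith

section binomPMF

variable {n : ℕ} {p : ℝ}

theorem binomPMF_nonneg (hp : p ∈ Set.Ioo (0 : ℝ) 1) (k : ℕ) : 0 ≤ binomPMF n p k := by
  have := hp.1
  have := sub_pos.2 hp.2
  unfold binomPMF
  positivity

theorem binomPMF_pos (hp : p ∈ Set.Ioo (0 : ℝ) 1) {k : ℕ} (hk : k ≤ n) :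
    0 < binomPMF n p k := by
  have := hp.1
  have := sub_pos.2 hp.2
  have := Nat.choose_pos hk
  unfold binomPMF
  positivity

theorem binomPMF_eq_zero_of_lt {k : ℕ} (h : n < k) : binomPMF n p k = 0 := by
  simp [binomPMF, Nat.choose_eq_zero_of_lt h]

theorem sum_range_binomPMF {N : ℕ} (hN : n < N) : ∑ j ∈ range N, binomPMF n p j = 1 := by
  rw [← sum_range_add_sum_Ico _ (show n + 1 ≤ N by omega),
    sum_eq_zero (s := Ico (n + 1) N) fun j hj => binomPMF_eq_zero_of_lt (by simp at hj; omega),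
    add_zero]
  calc ∑ j ∈ range (n + 1), binomPMF n p j = (p + (1 - p)) ^ n := by
        rw [add_pow]
        exact sum_congr rfl fun j _ => by unfold binomPMF; ring
    _ = 1 := by simp

theorem tsum_ite_le_binomPMF {N : ℕ} (hN : n < N) (k : ℕ) :
    ∑' j, (if k ≤ j then binomPMF n p j else 0) = ∑ j ∈ range N with k ≤ j, binomPMF n p j := by
  rw [sum_filter]
  exact tsum_eq_sum fun j hj => by simp [binomPMF_eq_zero_of_lt (show n < j by simp at hj; omega)]

theorem binomPMF_succ (hp : p ≠ 1) {j : ℕ} (hj : j < n) :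
    binomPMF n p (j + 1) = binomPMF n p j * ((n - j) / (j + 1) * (p / (1 - p))) := by
  have hchoose : (n.choose (j + 1) : ℝ) * (j + 1) = n.choose j * (n - j) := by
    have := congrArg (Nat.cast : ℕ → ℝ) (Nat.choose_succ_right_eq n j)
    push_cast [Nat.cast_sub hj.le] at this
    exact this
  have h1p : 1 - p ≠ 0 := sub_ne_zero.2 hp.symm
  unfold binomPMF
  rw [show n - j = n - (j + 1) + 1 by omega, pow_succ, pow_succ]
  field_simp
  linear_combination p ^ j * p * hchoose

theorem binomPMF_div_binomPMF_succ {n₁ n₂ : ℕ} {p₁ p₂ : ℝ} (hn : n₁ ≤ n₂)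
    (h₁ : p₁ ∈ Set.Ioo (0 : ℝ) 1) (h₂ : p₂ ∈ Set.Ioo (0 : ℝ) 1) {l : ℕ} (hl : l < n₁) :
    binomPMF n₂ p₂ (l + 1) / binomPMF n₁ p₁ (l + 1) =
      binomPMF n₂ p₂ l / binomPMF n₁ p₁ l *
        (p₂ / (1 - p₂) / (p₁ / (1 - p₁)) * ((n₂ - l) / (n₁ - l))) := by
  have hf := (binomPMF_pos h₁ hl.le).ne'
  have h1p₁ : 1 - p₁ ≠ 0 := sub_ne_zero.2 h₁.2.ne'
  have h1p₂ : 1 - p₂ ≠ 0 := sub_ne_zero.2 h₂.2.ne'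
  have hnl : (n₁ : ℝ) - l ≠ 0 := sub_ne_zero.2 (by exact_mod_cast hl.ne')
  rw [binomPMF_succ h₁.2.ne hl, binomPMF_succ h₂.2.ne (hl.trans_le hn)]
  field_simp [h₁.1.ne']

theorem binomPMF_single_crossing {n₁ n₂ : ℕ} {p₁ p₂ : ℝ} (hn : n₁ ≤ n₂)
    (h₁ : p₁ ∈ Set.Ioo (0 : ℝ) 1) (h₂ : p₂ ∈ Set.Ioo (0 : ℝ) 1)
    (hL : (1 - p₂) ^ n₂ ≤ (1 - p₁) ^ n₁) {i j : ℕ} (hij : i ≤ j)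
    (hi : binomPMF n₁ p₁ i < binomPMF n₂ p₂ i) : binomPMF n₁ p₁ j ≤ binomPMF n₂ p₂ j := by
  rcases lt_or_ge n₁ j with hj | hj
  · rw [binomPMF_eq_zero_of_lt hj]
    exact binomPMF_nonneg h₂ j
  set r : ℕ → ℝ := fun l => binomPMF n₂ p₂ l / binomPMF n₁ p₁ l
  have hr0 : r 0 ≤ 1 :=
    div_le_one_of_le₀ (by simpa [binomPMF] using hL) (binomPMF_nonneg h₁ 0)
  have hri : 1 < r i := (one_lt_div (binomPMF_pos h₁ (hij.trans hj))).2 hi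
  have hodds : 0 ≤ p₂ / (1 - p₂) / (p₁ / (1 - p₁)) := by
    have := h₁.1; have := h₂.1; have := sub_pos.2 h₁.2; have := sub_pos.2 h₂.2
    positivity
  have hrij : r i ≤ r j :=
    le_of_apply_zero_lt_of_monotoneOn_ratio (N := n₁)
      (fun l hl => div_pos (binomPMF_pos h₂ (hl.le.trans hn)) (binomPMF_pos h₁ hl.le))
      (fun l hl => binomPMF_div_binomPMF_succ hn h₁ h₂ hl)
      (fun l hl l' hl' hll' => mul_le_mul_of_nonneg_left
        (monotoneOn_sub_div_sub (by exact_mod_cast hn) (by simpa using hl) (by simpa using hl')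
          (by exact_mod_cast hll')) hodds)
      (hr0.trans_lt hri) hij hj
  exact ((one_lt_div (binomPMF_pos h₁ hj)).1 (hri.trans_le hrij)).le

end binomPMF

theorem binomial_stochastic_order_sufficient_general (n₁ n₂ : ℕ) (p₁ p₂ : ℝ)
    (hn : n₁ ≤ n₂)
    (h₁ : p₁ ∈ Set.Ioo (0:ℝ) 1) (h₂ : p₂ ∈ Set.Ioo (0:ℝ) 1)
    (hL : (1 - p₂) ^ n₂ ≤ (1 - p₁) ^ n₁) :
    ∀ k : ℕ, (∑' j : ℕ, if k ≤ j then binomPMF n₁ p₁ j else 0)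
      ≤ ∑' j : ℕ, if k ≤ j then binomPMF n₂ p₂ j else 0 := by
  intro k
  have hN₁ : n₁ < n₂ + 1 := Nat.lt_succ_of_le hn
  rw [tsum_ite_le_binomPMF hN₁, tsum_ite_le_binomPMF n₂.lt_succ_self]
  refine sum_tail_le_of_single_crossing ?_ (fun i j => binomPMF_single_crossing hn h₁ h₂ hL) k
  rw [sum_range_binomPMF hN₁, sum_range_binomPMF n₂.lt_succ_self]

theorem binomial_stochastic_order_sufficient (n₁ n₂ : ℕ) (p₁ p₂ : ℝ)
    (hn₁ : 1 ≤ n₁) (hn : n₁ ≤ n₂)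
    (h₁ : p₁ ∈ Set.Ioo (0:ℝ) 1) (h₂ : p₂ ∈ Set.Ioo (0:ℝ) 1)
    (hL : (1 - p₂) ^ n₂ ≤ (1 - p₁) ^ n₁) :
    ∀ k : ℕ, (∑' j : ℕ, if k ≤ j then binomPMF n₁ p₁ j else 0)
      ≤ ∑' j : ℕ, if k ≤ j then binomPMF n₂ p₂ j else 0 :=
  binomial_stochastic_order_sufficient_general n₁ n₂ p₁ p₂ hn h₁ h₂ hL
end

section
/- For r₁, r₂ > 0 and p₁, p₂ ∈ (0,1], the negative binomial distribution b⁻_{r₁,p₁} is stochastically smaller than b⁻_{r₂,p₂} if and only if p₁ ≥ p₂ and p₁^{r₁} ≥ p₂^{r₂}. -/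
/-- The negative binomial weight `b⁻_{r,p}({k}) = C(r+k-1,k) p^r (1-p)^k`,
where `C(r+k-1,k) = ∏_{l=1}^k (r+l-1)/l`. -/
noncomputable def negBinomPMF (r p : ℝ) (k : ℕ) : ℝ :=
  (∏ l ∈ Finset.range k, (r + l) / (l + 1)) * p ^ r * (1 - p) ^ k

/-!
The weights have total mass one by the binomial series `∑ₖ C(r+k-1,k) xᵏ = (1-x)^(-r)`.
The likelihood ratio `aₙ = b⁻_{r₂,p₂}({n}) / b⁻_{r₁,p₁}({n})` satisfies
`aₙ₊₁ = aₙ · (r₂+n)(1-p₂) / ((r₁+n)(1-p₁))`.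

If `p₂ ≤ p₁`, the indices where this factor is at least one form an upper set, and
`a₀ = p₂^r₂ / p₁^r₁ ≤ 1`; hence once `aₙ > 1` it stays so. Two distributions of equal mass
whose weights cross only once in this way have ordered tails: a tail starting after the crossing
is compared termwise, one starting before it through the complementary finite sum.

Conversely, the tail at `k = 1` is `1 - p^r`, which gives `p₂^r₂ ≤ p₁^r₁`. If `p₁ < p₂`, the
factor tends to `(1-p₂)/(1-p₁) < 1`, so `aₙ → 0` by the ratio test and the tails of the first
distribution eventually exceed those of the second.
-/

open Finset Filter Topology

theorem ascPochhammer_eval_eq_prod_range {R : Type*} [CommSemiring R] (n : ℕ) (r : R) :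
    (ascPochhammer R n).eval r = ∏ l ∈ range n, (r + l) := by
  induction n with
  | zero => simp
  | succ n ih => rw [ascPochhammer_succ_eval, ih, prod_range_succ]

theorem Real.multichoose_eq_prod_range (r : ℝ) (k : ℕ) :
    Ring.multichoose r k = ∏ l ∈ range k, (r + l) / (l + 1) := by
  have h := Ring.factorial_nsmul_multichoose_eq_ascPochhammer r k
  rw [Polynomial.ascPochhammer_smeval_eq_eval, nsmul_eq_mul,
    ascPochhammer_eval_eq_prod_range] at h
  rw [prod_div_distrib, eq_div_iff (by positivity), mul_comm, ← h]
  congr 1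
  exact_mod_cast prod_range_add_one_eq_factorial k

theorem Real.hasSum_multichoose_mul_pow (r : ℝ) {x : ℝ} (hx : |x| < 1) :
    HasSum (fun n ↦ Ring.multichoose r n * x ^ n) ((1 - x) ^ r)⁻¹ := by
  have := (Real.one_div_one_sub_rpow_hasFPowerSeriesOnBall_zero r).hasSum
    (y := x) (by simpa [enorm_eq_nnnorm, ← NNReal.coe_lt_coe] using hx)
  simpa [FormalMultilinearSeries.ofScalars_apply_eq, Ring.multichoose_eq, mul_comm] using this

theorem hasSum_ite_le {α : Type*} [AddCommGroup α] [TopologicalSpace α] [IsTopologicalAddGroup α]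
    {f : ℕ → α} {s : α} (hf : HasSum f s) (k : ℕ) :
    HasSum (fun j ↦ if k ≤ j then f j else 0) (s - ∑ j ∈ range k, f j) := by
  have hk : HasSum (fun j ↦ if j < k then f j else 0) (∑ j ∈ range k, f j) := by
    rw [← sum_congr rfl fun j hj ↦ if_pos (mem_range.1 hj)]
    exact hasSum_sum_of_ne_finset_zero fun j hj ↦ if_neg (by simpa using hj)
  convert hf.sub hk using 1
  ext j
  split_ifs <;> first | omega | simp

theorem tsum_ite_le_le_of_crossing {f g : ℕ → ℝ} {s : ℝ} (hf : HasSum f s) (hg : HasSum g s)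
    (hfg : ∀ i j, i ≤ j → f i < g i → f j ≤ g j) (k : ℕ) :
    (∑' j, if k ≤ j then f j else 0) ≤ ∑' j, if k ≤ j then g j else 0 := by
  by_cases h : ∃ i < k, f i < g i
  · obtain ⟨i, hik, hi⟩ := h
    refine Summable.tsum_le_tsum (fun j ↦ ?_) (hasSum_ite_le hf k).summable
      (hasSum_ite_le hg k).summable
    split_ifs with hkj
    exacts [hfg i j (by omega) hi, le_rfl]
  · push Not at h
    rw [(hasSum_ite_le hf k).tsum_eq, (hasSum_ite_le hg k).tsum_eq]
    exact sub_le_sub_left (sum_le_sum fun j hj ↦ h j (mem_range.1 hj)) s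

theorem tsum_ite_le_lt_of_forall_lt {f g : ℕ → ℝ} (hf : Summable f) (hg : Summable g) {k : ℕ}
    (hfg : ∀ j ≥ k, f j < g j) :
    (∑' j, if k ≤ j then f j else 0) < ∑' j, if k ≤ j then g j else 0 := by
  refine Summable.tsum_lt_tsum (i := k) (fun j ↦ ?_) (by simpa using hfg k le_rfl)
    (hasSum_ite_le hf.hasSum k).summable (hasSum_ite_le hg.hasSum k).summable
  split_ifs with hkj
  exacts [(hfg j hkj).le, le_rfl]

theorem lt_of_isUpperSet_ascents {α : Type*} [LinearOrder α] {a : ℕ → α}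
    (ha : IsUpperSet {n | a n ≤ a (n + 1)}) {c : α} {i j : ℕ} (h0 : a 0 ≤ c) (hi : c < a i)
    (hij : i ≤ j) : c < a j := by
  obtain ⟨l, hli, hl⟩ : ∃ l < i, a l ≤ a (l + 1) := by
    by_contra! hdesc
    have hle : ∀ n ≤ i, a n ≤ a 0 := by
      intro n
      induction n with
      | zero => exact fun _ ↦ le_rfl
      | succ n ih => exact fun hn ↦ (hdesc n (by omega)).le.trans (ih (by omega))
    exact (hle i le_rfl).not_gt (h0.trans_lt hi)
  have hmono : ∀ n ≥ i, a i ≤ a n :=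
    Nat.le_induction le_rfl fun n hn ih ↦ ih.trans (ha (hli.le.trans hn) hl)
  exact hi.trans_le (hmono j hij)

section NegBinom

variable {r r₁ r₂ p p₁ p₂ : ℝ}

theorem negBinomPMF_eq_multichoose (r p : ℝ) (k : ℕ) :
    negBinomPMF r p k = p ^ r * (Ring.multichoose r k * (1 - p) ^ k) := by
  rw [negBinomPMF, Real.multichoose_eq_prod_range]
  ring

theorem hasSum_negBinomPMF (r : ℝ) (hp₀ : 0 < p) (hp₂ : p < 2) : HasSum (negBinomPMF r p) 1 := by
  have h := (Real.hasSum_multichoose_mul_pow r (x := 1 - p)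
    (abs_lt.2 ⟨by linarith, by linarith⟩)).mul_left (p ^ r)
  rwa [sub_sub_cancel, mul_inv_cancel₀ (Real.rpow_pos_of_pos hp₀ r).ne',
    ← funext (negBinomPMF_eq_multichoose r p)] at h

theorem negBinomPMF_zero (r p : ℝ) : negBinomPMF r p 0 = p ^ r := by
  simp [negBinomPMF]

theorem negBinomPMF_succ (r p : ℝ) (k : ℕ) :
    negBinomPMF r p (k + 1) = negBinomPMF r p k * ((r + k) * (1 - p) / (k + 1)) := by
  simp only [negBinomPMF, prod_range_succ, pow_succ]
  ring

theorem negBinomPMF_one_of_ne_zero (r : ℝ) {k : ℕ} (hk : k ≠ 0) : negBinomPMF r 1 k = 0 := by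
  simp [negBinomPMF, hk]

theorem negBinomPMF_nonneg (hr : 0 ≤ r) (hp₀ : 0 ≤ p) (hp₁ : p ≤ 1) (k : ℕ) :
    0 ≤ negBinomPMF r p k := by
  have : 0 ≤ 1 - p := by linarith
  unfold negBinomPMF
  positivity

theorem negBinomPMF_pos (hr : 0 < r) (hp₀ : 0 < p) (hp₁ : p < 1) (k : ℕ) :
    0 < negBinomPMF r p k := by
  have : 0 < 1 - p := by linarith
  unfold negBinomPMF
  positivity

theorem negBinomPMF_div_succ (r₁ r₂ p₁ p₂ : ℝ) (n : ℕ) :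
    negBinomPMF r₂ p₂ (n + 1) / negBinomPMF r₁ p₁ (n + 1) =
      negBinomPMF r₂ p₂ n / negBinomPMF r₁ p₁ n *
        ((r₂ + n) * (1 - p₂) / ((r₁ + n) * (1 - p₁))) := by
  rw [negBinomPMF_succ, negBinomPMF_succ, mul_div_mul_comm,
    div_div_div_cancel_right₀ (by positivity)]

theorem isUpperSet_negBinomPMF_div_ascents (hr₁ : 0 < r₁) (hr₂ : 0 < r₂) (hp₁₀ : 0 < p₁)
    (hp₂₀ : 0 < p₂) (hp : p₂ ≤ p₁) (hp₁ : p₁ < 1) :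
    IsUpperSet {n : ℕ | negBinomPMF r₂ p₂ n / negBinomPMF r₁ p₁ n ≤
      negBinomPMF r₂ p₂ (n + 1) / negBinomPMF r₁ p₁ (n + 1)} := by
  have hratio : ∀ n : ℕ, 0 < negBinomPMF r₂ p₂ n / negBinomPMF r₁ p₁ n := fun n ↦
    div_pos (negBinomPMF_pos hr₂ hp₂₀ (by linarith) n) (negBinomPMF_pos hr₁ hp₁₀ hp₁ n)
  have hden : ∀ n : ℕ, 0 < (r₁ + n) * (1 - p₁) := fun n ↦ mul_pos (by positivity) (by linarith)
  intro m n hmn hm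
  simp only [Set.mem_ofPred_eq, negBinomPMF_div_succ, le_mul_iff_one_le_right (hratio _),
    one_le_div (hden _)] at hm ⊢
  have : (m : ℝ) ≤ n := by exact_mod_cast hmn
  nlinarith

theorem negBinomPMF_le_of_lt_of_le (hr₁ : 0 < r₁) (hr₂ : 0 < r₂) (h₁ : p₁ ∈ Set.Ioc (0 : ℝ) 1)
    (h₂ : p₂ ∈ Set.Ioc (0 : ℝ) 1) (hp : p₂ ≤ p₁) (hpr : p₂ ^ r₂ ≤ p₁ ^ r₁) {i j : ℕ}
    (hij : i ≤ j) (hi : negBinomPMF r₁ p₁ i < negBinomPMF r₂ p₂ i) :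
    negBinomPMF r₁ p₁ j ≤ negBinomPMF r₂ p₂ j := by
  obtain ⟨hp₁₀, hp₁⟩ := h₁
  obtain ⟨hp₂₀, hp₂⟩ := h₂
  rcases hp₁.eq_or_lt with rfl | hp₁
  · rcases eq_or_ne j 0 with rfl | hj
    · exact (Nat.le_zero.1 hij ▸ hi).le
    · rw [negBinomPMF_one_of_ne_zero r₁ hj]
      exact negBinomPMF_nonneg hr₂.le hp₂₀.le hp₂ j
  · have hpos := negBinomPMF_pos hr₁ hp₁₀ hp₁
    refine ((one_lt_div (hpos j)).1 (lt_of_isUpperSet_ascents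
      (isUpperSet_negBinomPMF_div_ascents hr₁ hr₂ hp₁₀ hp₂₀ hp hp₁) ?_
      ((one_lt_div (hpos i)).2 hi) hij)).le
    rwa [div_le_one (hpos 0), negBinomPMF_zero, negBinomPMF_zero]

theorem eventually_negBinomPMF_lt (hr₁ : 0 < r₁) (hr₂ : 0 ≤ r₂) (hp₁₀ : 0 < p₁) (hp : p₁ < p₂)
    (hp₂ : p₂ ≤ 1) : ∀ᶠ n in atTop, negBinomPMF r₂ p₂ n < negBinomPMF r₁ p₁ n := by
  have hpos := negBinomPMF_pos hr₁ hp₁₀ (hp.trans_le hp₂)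
  have hq₁ : 0 < 1 - p₁ := by linarith
  have hρ : Tendsto (fun n : ℕ ↦ (r₂ + n) * (1 - p₂) / ((r₁ + n) * (1 - p₁))) atTop
      (𝓝 ((1 - p₂) / (1 - p₁))) := by
    convert tendsto_add_mul_div_add_mul_atTop_nhds (r₂ * (1 - p₂)) (r₁ * (1 - p₁)) (1 - p₂)
      hq₁.ne' using 2 with n
    ring_nf
  obtain ⟨c, hc, hc₁⟩ := exists_between ((div_lt_one hq₁).2 (by linarith : 1 - p₂ < 1 - p₁))
  have hsummable : Summable fun n ↦ negBinomPMF r₂ p₂ n / negBinomPMF r₁ p₁ n := by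
    refine summable_of_ratio_norm_eventually_le hc₁ ((hρ.eventually (gt_mem_nhds hc)).mono
      fun n hn ↦ ?_)
    rw [negBinomPMF_div_succ, norm_mul, mul_comm]
    refine mul_le_mul_of_nonneg_right ?_ (norm_nonneg _)
    rw [Real.norm_of_nonneg (div_nonneg (mul_nonneg (by positivity) (by linarith))
      (mul_pos (by positivity) hq₁).le)]
    exact hn.le
  filter_upwards [hsummable.tendsto_atTop_zero.eventually (gt_mem_nhds one_pos)] with n hn
  exact (div_lt_one (hpos n)).1 hn

end NegBinom

theorem negBinomial_stochastic_order_iff (r₁ r₂ p₁ p₂ : ℝ)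
    (hr₁ : 0 < r₁) (hr₂ : 0 < r₂)
    (h₁ : p₁ ∈ Set.Ioc (0:ℝ) 1) (h₂ : p₂ ∈ Set.Ioc (0:ℝ) 1) :
    (∀ k : ℕ, (∑' j : ℕ, if k ≤ j then negBinomPMF r₁ p₁ j else 0)
        ≤ ∑' j : ℕ, if k ≤ j then negBinomPMF r₂ p₂ j else 0)
      ↔ p₂ ≤ p₁ ∧ p₂ ^ r₂ ≤ p₁ ^ r₁ := by
  have hf₁ := hasSum_negBinomPMF r₁ h₁.1 (by linarith [h₁.2])
  have hf₂ := hasSum_negBinomPMF r₂ h₂.1 (by linarith [h₂.2])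
  constructor
  · intro H
    have hpr : p₂ ^ r₂ ≤ p₁ ^ r₁ := by
      have h := H 1
      rwa [(hasSum_ite_le hf₁ 1).tsum_eq, (hasSum_ite_le hf₂ 1).tsum_eq, sum_range_one,
        sum_range_one, negBinomPMF_zero, negBinomPMF_zero, sub_le_sub_iff_left] at h
    refine ⟨le_of_not_gt fun hp ↦ ?_, hpr⟩
    obtain ⟨k, hk⟩ := (eventually_negBinomPMF_lt hr₁ hr₂.le h₁.1 hp h₂.2).exists_forall_of_atTop
    exact (H k).not_gt (tsum_ite_le_lt_of_forall_lt hf₂.summable hf₁.summable hk)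
  · rintro ⟨hp, hpr⟩
    exact tsum_ite_le_le_of_crossing hf₁ hf₂ fun i j hij hi ↦
      negBinomPMF_le_of_lt_of_le hr₁ hr₂ h₁ h₂ hp hpr hij hi
end

section
/- For n ∈ ℕ, p ∈ [0,1], and λ > 0, the binomial distribution b_{n,p} is stochastically smaller than the Poisson distribution Poi_λ if and only if (1-p)^n ≥ e^{-λ}. -/
/-- The Poisson weight `Poi_λ({k}) = e^{-λ} λ^k / k!`. -/
noncomputable def poissonPMF (l : ℝ) (k : ℕ) : ℝ :=
  Real.exp (-l) * l ^ k / (Nat.factorial k)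

/-!
Write `1 - p = e^{-b}` and let `F_n`, `G_λ` be the distribution functions of `b_{n,p}` and
`Poi_λ`. Conditioning on the last trial gives `F_{n+1}(k+1) = (1-p) F_n(k+1) + p F_n(k)`, while
`Poi_{a+b} = Poi_a * Poi_b` with `Poi_b({0}) = e^{-b}` gives
`G_{a+b}(k+1) ≤ e^{-b} G_a(k+1) + (1 - e^{-b}) G_a(k)`; we prove the latter by differentiating
in `b`, the derivative of `G_{a+b}(k+1)` being `-Poi_{a+b}({k})`. Induction on `n` with
`a = λ - b` then yields `G_λ ≤ F_n` whenever `e^{-λ} ≤ (1-p)^n`. Conversely, the tails at `k = 1`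
are `1 - (1-p)^n` and `1 - e^{-λ}`.
-/

open Finset

theorem tsum_ite_le_eq_sub {f : ℕ → ℝ} {s : ℝ} (hf : HasSum f s) (k : ℕ) :
    ∑' j, (if k ≤ j then f j else 0) = s - ∑ j ∈ range k, f j := by
  have hhead : HasSum (fun j => if j < k then f j else 0) (∑ j ∈ range k, f j) := by
    rw [← sum_congr rfl fun j hj => if_pos (mem_range.1 hj)]
    exact hasSum_sum_of_ne_finset_zero fun j hj => if_neg (by simpa using hj)
  refine ((hf.sub hhead).congr_fun fun j => ?_).tsum_eq
  split_ifs <;> first | omega | simp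

theorem binomPMF_succ_zero (n : ℕ) (p : ℝ) :
    binomPMF (n + 1) p 0 = (1 - p) * binomPMF n p 0 := by
  simp [binomPMF, pow_succ']

theorem binomPMF_succ_succ (n j : ℕ) (p : ℝ) :
    binomPMF (n + 1) p (j + 1) = (1 - p) * binomPMF n p (j + 1) + p * binomPMF n p j := by
  simp only [binomPMF, Nat.choose_succ_succ', Nat.cast_add]
  rcases lt_or_ge j n with hj | hj
  · rw [Nat.add_sub_add_right, show n - j = n - (j + 1) + 1 by omega]
    ring
  · rw [Nat.choose_eq_zero_of_lt (by omega : n < j + 1), Nat.sub_eq_zero_of_le hj,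
      Nat.sub_eq_zero_of_le (by omega : n ≤ j + 1), Nat.sub_eq_zero_of_le (by omega : n + 1 ≤ j + 1)]
    ring

theorem hasSum_binomPMF (n : ℕ) (p : ℝ) : HasSum (binomPMF n p) 1 := by
  have hsupp : ∀ j ∉ range (n + 1), binomPMF n p j = 0 := fun j hj => by
    simp [binomPMF, Nat.choose_eq_zero_of_lt (by simpa using hj : n < j)]
  have : ∑ j ∈ range (n + 1), binomPMF n p j = 1 := by
    calc ∑ j ∈ range (n + 1), binomPMF n p j
        = ∑ j ∈ range (n + 1), p ^ j * (1 - p) ^ (n - j) * n.choose j :=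
          sum_congr rfl fun j _ => by simp only [binomPMF]; ring
      _ = 1 := by rw [← add_pow, add_sub_cancel, one_pow]
  exact this ▸ hasSum_sum_of_ne_finset_zero hsupp

theorem poissonPMF_nonneg {l : ℝ} (hl : 0 ≤ l) (k : ℕ) : 0 ≤ poissonPMF l k := by
  unfold poissonPMF; positivity

theorem hasSum_poissonPMF (l : ℝ) : HasSum (poissonPMF l) 1 := by
  have := (NormedSpace.expSeries_div_hasSum_exp l).mul_left (Real.exp (-l))
  rw [← Real.exp_eq_exp_ℝ, ← Real.exp_add, neg_add_cancel, Real.exp_zero] at this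
  exact this.congr_fun fun j => mul_div_assoc ..

theorem hasDerivAt_poissonPMF_zero (x : ℝ) :
    HasDerivAt (fun x => poissonPMF x 0) (-poissonPMF x 0) x := by
  simpa [poissonPMF] using (hasDerivAt_neg x).exp

theorem hasDerivAt_poissonPMF_succ (m : ℕ) (x : ℝ) :
    HasDerivAt (fun x => poissonPMF x (m + 1)) (poissonPMF x m - poissonPMF x (m + 1)) x := by
  refine ((((hasDerivAt_neg x).exp).mul (hasDerivAt_pow (m + 1) x)).div_const
    ((m + 1).factorial : ℝ)).congr_deriv ?_
  simp only [poissonPMF, Nat.factorial_succ, Nat.cast_mul, Nat.add_sub_cancel]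
  field_simp
  push_cast
  ring

theorem exp_neg_mul_poissonPMF_le {a x : ℝ} (ha : 0 ≤ a) (hx : 0 ≤ x) (k : ℕ) :
    Real.exp (-x) * poissonPMF a k ≤ poissonPMF (a + x) k := by
  calc Real.exp (-x) * poissonPMF a k = Real.exp (-(a + x)) * a ^ k / k.factorial := by
        rw [poissonPMF, neg_add, Real.exp_add]; ring
    _ ≤ poissonPMF (a + x) k := by unfold poissonPMF; gcongr; linarith

/-- `binomCDF n p k` and `poissonCDF l k` are the weights of `{0, …, k - 1}`, i.e. `P(X < k)`. -/
noncomputable def binomCDF (n : ℕ) (p : ℝ) (k : ℕ) : ℝ := ∑ j ∈ range k, binomPMF n p j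

noncomputable def poissonCDF (l : ℝ) (k : ℕ) : ℝ := ∑ j ∈ range k, poissonPMF l j

theorem binomCDF_zero_succ (p : ℝ) (k : ℕ) : binomCDF 0 p (k + 1) = 1 := by
  simp [binomCDF, sum_range_succ', binomPMF]

theorem binomCDF_succ_succ (n k : ℕ) (p : ℝ) :
    binomCDF (n + 1) p (k + 1) = (1 - p) * binomCDF n p (k + 1) + p * binomCDF n p k := by
  simp only [binomCDF, sum_range_succ' _ k, binomPMF_succ_zero, binomPMF_succ_succ,
    sum_add_distrib, ← mul_sum]
  ring

theorem poissonCDF_le_one {l : ℝ} (hl : 0 ≤ l) (k : ℕ) : poissonCDF l k ≤ 1 :=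
  sum_le_hasSum _ (fun j _ => poissonPMF_nonneg hl j) (hasSum_poissonPMF l)

theorem hasDerivAt_poissonCDF_succ (k : ℕ) (x : ℝ) :
    HasDerivAt (fun x => poissonCDF x (k + 1)) (-poissonPMF x k) x := by
  induction k with
  | zero => simpa [poissonCDF] using hasDerivAt_poissonPMF_zero x
  | succ k ih =>
    simp only [poissonCDF, sum_range_succ _ (k + 1)] at ih ⊢
    exact (ih.add (hasDerivAt_poissonPMF_succ k x)).congr_deriv (by ring)

theorem poissonCDF_add_le {a b : ℝ} (ha : 0 ≤ a) (hb : 0 ≤ b) (k : ℕ) :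
    poissonCDF (a + b) (k + 1)
      ≤ Real.exp (-b) * poissonCDF a (k + 1) + (1 - Real.exp (-b)) * poissonCDF a k := by
  set G : ℝ → ℝ := fun x => Real.exp (-x) * poissonCDF a (k + 1)
    + (1 - Real.exp (-x)) * poissonCDF a k - poissonCDF (a + x) (k + 1)
  have hG : ∀ x, HasDerivAt G (poissonPMF (a + x) k - Real.exp (-x) * poissonPMF a k) x := by
    intro x
    have hexp := (hasDerivAt_neg x).exp
    have hcdf := (hasDerivAt_poissonCDF_succ k (a + x)).comp_const_add a x
    refine ((hexp.mul_const _).add ((hexp.const_sub 1).mul_const _) |>.sub hcdf).congr_deriv ?_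
    simp only [poissonCDF, sum_range_succ _ k]
    ring
  have hmono : MonotoneOn G (Set.Ici 0) := by
    refine monotoneOn_of_hasDerivWithinAt_nonneg (convex_Ici 0)
      (fun x _ => (hG x).continuousAt.continuousWithinAt)
      (fun x _ => (hG x).hasDerivWithinAt) fun x hx => ?_
    rw [interior_Ici] at hx
    exact sub_nonneg.2 (exp_neg_mul_poissonPMF_le ha (le_of_lt hx) k)
  have := hmono Set.self_mem_Ici hb hb
  simp only [G, neg_zero, Real.exp_zero, add_zero, sub_self] at this
  linarith

theorem poissonCDF_le_binomCDF {p : ℝ} (hp0 : 0 ≤ p) (hp1 : p ≤ 1) (n : ℕ) {l : ℝ}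
    (hl : Real.exp (-l) ≤ (1 - p) ^ n) (k : ℕ) : poissonCDF l k ≤ binomCDF n p k := by
  induction n generalizing l k with
  | zero =>
    cases k with
    | zero => simp [poissonCDF, binomCDF]
    | succ k =>
      rw [binomCDF_zero_succ]
      exact poissonCDF_le_one (by simpa using hl) _
  | succ n ih =>
    have hq : 0 < 1 - p :=
      lt_of_le_of_ne (by linarith) fun h => (Real.exp_pos _).not_ge (by simpa [← h] using hl)
    set b := -Real.log (1 - p)
    have hexp_b : Real.exp (-b) = 1 - p := by simp [b, Real.exp_log hq]
    have hb : 0 ≤ b := by simpa [b] using Real.log_nonpos hq.le (by linarith)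
    have hexp_a : Real.exp (-(l - b)) ≤ (1 - p) ^ n := by
      have hsplit : Real.exp (-(l - b)) * (1 - p) = Real.exp (-l) := by
        rw [← hexp_b, ← Real.exp_add]; ring_nf
      exact le_of_mul_le_mul_right (by rwa [hsplit, ← pow_succ]) hq
    have ha : 0 ≤ l - b := by
      simpa using hexp_a.trans (pow_le_one₀ hq.le (by linarith))
    cases k with
    | zero => simp [poissonCDF, binomCDF]
    | succ k =>
      calc poissonCDF l (k + 1) = poissonCDF (l - b + b) (k + 1) := by rw [sub_add_cancel]
        _ ≤ (1 - p) * poissonCDF (l - b) (k + 1) + p * poissonCDF (l - b) k := by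
          simpa [hexp_b] using poissonCDF_add_le ha hb k
        _ ≤ (1 - p) * binomCDF n p (k + 1) + p * binomCDF n p k := by
          gcongr <;> exact ih hexp_a _
        _ = binomCDF (n + 1) p (k + 1) := (binomCDF_succ_succ n k p).symm

theorem binomial_le_poisson_iff_general (n : ℕ) (p l : ℝ)
    (hp : p ∈ Set.Icc (0:ℝ) 1) :
    (∀ k : ℕ, (∑' j : ℕ, if k ≤ j then binomPMF n p j else 0)
        ≤ ∑' j : ℕ, if k ≤ j then poissonPMF l j else 0)
      ↔ Real.exp (-l) ≤ (1 - p) ^ n := by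
  simp only [tsum_ite_le_eq_sub (hasSum_binomPMF n p), tsum_ite_le_eq_sub (hasSum_poissonPMF l),
    sub_le_sub_iff_left]
  refine ⟨fun h => ?_, fun h k => poissonCDF_le_binomCDF hp.1 hp.2 n h k⟩
  simpa [binomPMF, poissonPMF] using h 1

theorem binomial_le_poisson_iff (n : ℕ) (p l : ℝ)
    (hn : 1 ≤ n) (hp : p ∈ Set.Icc (0:ℝ) 1) (hl : 0 < l) :
    (∀ k : ℕ, (∑' j : ℕ, if k ≤ j then binomPMF n p j else 0)
        ≤ ∑' j : ℕ, if k ≤ j then poissonPMF l j else 0)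
      ↔ Real.exp (-l) ≤ (1 - p) ^ n :=
  binomial_le_poisson_iff_general n p l hp
end

section
/- For r > 0, p ∈ (0,1), and k ∈ ℕ, the derivative in p of the negative binomial lower tail satisfies (d/dp) b⁻_{r,p}({0,...,k-1}) = k · C(r+k-1,k) · (1-p)^{k-1} p^{r-1}. -/
noncomputable def negBinomCoeff (r : ℝ) (k : ℕ) : ℝ :=
  ∏ l ∈ Finset.range k, (r + l) / (l + 1)

theorem succ_mul_negBinomCoeff_succ (r : ℝ) (k : ℕ) :
    ((k : ℝ) + 1) * negBinomCoeff r (k + 1) = (r + k) * negBinomCoeff r k := by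
  have h : negBinomCoeff r (k + 1) = negBinomCoeff r k * ((r + k) / (k + 1)) :=
    Finset.prod_range_succ _ _
  rw [h]
  field_simp

noncomputable def negBinomCdfDeriv (r p : ℝ) (k : ℕ) : ℝ :=
  k * negBinomCoeff r k * (1 - p) ^ (k - 1) * p ^ (r - 1)

theorem negBinomCdfDeriv_zero (r p : ℝ) : negBinomCdfDeriv r p 0 = 0 := by
  simp [negBinomCdfDeriv]

theorem hasDerivAt_negBinomPMF (r : ℝ) {p : ℝ} (hp : 0 < p) (k : ℕ) :
    HasDerivAt (fun q => negBinomPMF r q k)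
      (negBinomCdfDeriv r p (k + 1) - negBinomCdfDeriv r p k) p := by
  have hpow : HasDerivAt (fun q => q ^ r) (r * p ^ (r - 1)) p :=
    Real.hasDerivAt_rpow_const (Or.inl hp.ne')
  have hcompl : HasDerivAt (fun q => (1 - q) ^ k) (k * (1 - p) ^ (k - 1) * -1) p :=
    ((hasDerivAt_id p).const_sub 1).fun_pow k
  refine ((hpow.const_mul (negBinomCoeff r k)).fun_mul hcompl).congr_deriv ?_
  have hrpow : p ^ r = p ^ (r - 1) * p := by
    rw [← Real.rpow_add_one hp.ne', sub_add_cancel]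
  rcases k with _ | m
  · simp [negBinomCdfDeriv, negBinomCoeff]
  · have hcoeff := succ_mul_negBinomCoeff_succ r (m + 1)
    simp only [negBinomCdfDeriv, Nat.add_sub_cancel, hrpow]
    push_cast at hcoeff ⊢
    linear_combination -(1 - p) ^ (m + 1) * p ^ (r - 1) * hcoeff

theorem negBinomial_cdf_deriv_general (r p : ℝ) (k : ℕ)
    (hp : p ∈ Set.Ioo (0:ℝ) 1) :
    HasDerivAt (fun q : ℝ => ∑ j ∈ Finset.range k, negBinomPMF r q j)
      ((k : ℝ) * (∏ l ∈ Finset.range k, (r + l) / (l + 1)) *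
        (1 - p) ^ (k - 1) * p ^ (r - 1)) p := by
  have h := HasDerivAt.fun_sum fun j (_ : j ∈ Finset.range k) => hasDerivAt_negBinomPMF r hp.1 j
  rwa [Finset.sum_range_sub, negBinomCdfDeriv_zero, sub_zero] at h

/-- Derivative in `p` of the negative binomial lower tail:
`(d/dp) b⁻_{r,p}({0,…,k-1}) = k C(r+k-1,k) (1-p)^{k-1} p^{r-1}`. -/
theorem negBinomial_cdf_deriv (r p : ℝ) (k : ℕ)
    (hr : 0 < r) (hp : p ∈ Set.Ioo (0:ℝ) 1) (hk : 1 ≤ k) :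
    HasDerivAt (fun q : ℝ => ∑ j ∈ Finset.range k, negBinomPMF r q j)
      ((k : ℝ) * (∏ l ∈ Finset.range k, (r + l) / (l + 1)) *
        (1 - p) ^ (k - 1) * p ^ (r - 1)) p :=
  negBinomial_cdf_deriv_general r p k hp
end

section
/- Let balls be thrown independently and uniformly at random into n boxes, and let N_{n,t} denote the number of nonempty boxes after t throws. Then for each fixed t ∈ ℕ, the sequence (N_{n,t})_{n∈ℕ} is stochastically increasing in n: for m < n, P(N_{m,t} ≥ l) ≤ P(N_{n,t} ≥ l) for all l. -/
/-! The tail `T_n(t, l) = P(N_{n,t} ≥ l)` satisfies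
`T_n(t+1, l+1) = (1 - l/n) T_n(t, l) + (l/n) T_n(t, l+1)`, a convex combination of two tail
values of which the second is the smaller. Passing from `m` to `n ≥ m` raises both tail values
(induction on `t`) and moves weight `l/m - l/n ≥ 0` from the smaller one to the larger. -/

/-- `boxDist n t k` is the probability that after throwing `t` balls independently
and uniformly into `n` boxes, exactly `k` boxes are nonempty: the Markov chain on
`{0,…,n}` started at `0` with transitions `p_n(k,k) = k/n`, `p_n(k,k+1) = 1 - k/n`. -/
noncomputable def boxDist (n : ℕ) : ℕ → ℕ → ℝ
  | 0, k => if k = 0 then 1 else 0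
  | t + 1, k =>
      ((k : ℝ) / n) * boxDist n t k +
        (if k = 0 then 0 else (1 - ((k : ℝ) - 1) / n) * boxDist n t (k - 1))

open Finset

theorem boxDist_zero (n k : ℕ) : boxDist n 0 k = if k = 0 then 1 else 0 := rfl

theorem boxDist_succ_zero (n t : ℕ) : boxDist n (t + 1) 0 = 0 := by
  simp [boxDist]

theorem boxDist_succ_succ (n t k : ℕ) : boxDist n (t + 1) (k + 1) =
    ((k + 1 : ℝ) / n) * boxDist n t (k + 1) + (1 - (k : ℝ) / n) * boxDist n t k := by
  simp [boxDist]

theorem boxDist_eq_zero_of_lt {n t k : ℕ} (h : t < k) : boxDist n t k = 0 := by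
  induction t generalizing k with
  | zero => simp [boxDist_zero, Nat.pos_iff_ne_zero.mp h]
  | succ t ih =>
    obtain ⟨j, rfl⟩ := Nat.exists_eq_add_one_of_ne_zero (by omega : k ≠ 0)
    rw [boxDist_succ_succ, ih (by omega), ih (by omega)]
    ring

theorem boxDist_eq_zero_of_boxes_lt {n : ℕ} (hn : 0 < n) {t k : ℕ} (h : n < k) :
    boxDist n t k = 0 := by
  induction t generalizing k with
  | zero => simp [boxDist_zero, Nat.pos_iff_ne_zero.mp (hn.trans h)]
  | succ t ih =>
    obtain ⟨j, rfl⟩ := Nat.exists_eq_add_one_of_ne_zero (by omega : k ≠ 0)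
    rw [boxDist_succ_succ, ih h]
    rcases (Nat.lt_succ_iff.mp h).eq_or_lt with rfl | hj
    · simp [div_self (Nat.cast_ne_zero.mpr hn.ne' : (n : ℝ) ≠ 0)]
    · simp [ih hj]

theorem boxDist_nonneg {n : ℕ} (hn : 0 < n) (t k : ℕ) : 0 ≤ boxDist n t k := by
  induction t generalizing k with
  | zero => rw [boxDist_zero]; positivity
  | succ t ih =>
    cases k with
    | zero => rw [boxDist_succ_zero]
    | succ k =>
      rw [boxDist_succ_succ]
      rcases le_or_gt k n with hk | hk
      · have hcoef : 0 ≤ 1 - (k : ℝ) / n :=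
          sub_nonneg.mpr (div_le_one_of_le₀ (by exact_mod_cast hk) n.cast_nonneg)
        exact add_nonneg (by have := ih (k + 1); positivity) (mul_nonneg hcoef (ih k))
      · simp [boxDist_eq_zero_of_boxes_lt hn hk,
          boxDist_eq_zero_of_boxes_lt hn (by omega : n < k + 1)]

noncomputable def boxTail (n t l : ℕ) : ℝ :=
  ∑' k : ℕ, if l ≤ k then boxDist n t k else 0

theorem boxTail_eq_sum_Ico (n l : ℕ) {t N : ℕ} (hN : t < N) :
    boxTail n t l = ∑ k ∈ Ico l N, boxDist n t k := by
  rw [boxTail, tsum_eq_sum (s := range N), ← sum_filter, range_eq_Ico, Ico_filter_le,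
    Nat.zero_max]
  intro k hk
  simp [boxDist_eq_zero_of_lt (hN.trans_le (by simpa using hk))]

theorem boxTail_eq_add (n t l : ℕ) : boxTail n t l = boxDist n t l + boxTail n t (l + 1) := by
  rw [boxTail_eq_sum_Ico n l (N := l + t + 1) (by omega),
    boxTail_eq_sum_Ico n (l + 1) (N := l + t + 1) (by omega),
    sum_eq_sum_Ico_succ_bot (by omega)]

theorem boxTail_nonneg {n : ℕ} (hn : 0 < n) (t l : ℕ) : 0 ≤ boxTail n t l :=
  tsum_nonneg fun k => by split_ifs <;> simp [boxDist_nonneg hn]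

theorem boxTail_succ_le {n : ℕ} (hn : 0 < n) (t l : ℕ) :
    boxTail n t (l + 1) ≤ boxTail n t l := by
  rw [boxTail_eq_add n t l]
  linarith [boxDist_nonneg hn t l]

theorem boxTail_eq_zero_of_boxes_lt {n : ℕ} (hn : 0 < n) (t : ℕ) {l : ℕ} (h : n < l) :
    boxTail n t l = 0 :=
  (tsum_congr fun k => by
    split_ifs with hk
    · exact boxDist_eq_zero_of_boxes_lt hn (h.trans_le hk)
    · rfl).trans tsum_zero

/-- Only the mass moving from `l` to `l + 1` enters; the flux across higher levels telescopes. -/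
theorem boxTail_succ_succ_eq_add (n t l : ℕ) : boxTail n (t + 1) (l + 1) =
    boxTail n t (l + 1) + (1 - (l : ℝ) / n) * boxDist n t l := by
  set flux : ℕ → ℝ := fun k => (1 - (k : ℝ) / n) * boxDist n t k
  have step (k : ℕ) :
      boxDist n (t + 1) (k + 1) = boxDist n t (k + 1) - (flux (k + 1) - flux k) := by
    simp only [flux, boxDist_succ_succ]
    push_cast
    ring
  have flux_top : flux (l + t + 1) = 0 := by
    simp [flux, boxDist_eq_zero_of_lt (by omega : t < l + t + 1)]
  rw [boxTail_eq_sum_Ico n (l + 1) (N := l + t + 2) (by omega),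
    boxTail_eq_sum_Ico n (l + 1) (N := l + t + 2) (by omega),
    ← sum_Ico_add' _ l (l + t + 1), ← sum_Ico_add' _ l (l + t + 1)]
  simp only [step, sum_sub_distrib, sum_Ico_sub flux (by omega : l ≤ l + t + 1), flux_top]
  ring

theorem boxTail_succ_succ (n t l : ℕ) : boxTail n (t + 1) (l + 1) =
    (1 - (l : ℝ) / n) * boxTail n t l + ((l : ℝ) / n) * boxTail n t (l + 1) := by
  rw [boxTail_succ_succ_eq_add, boxTail_eq_add n t l]
  ring

theorem boxTail_succ_zero (n t : ℕ) : boxTail n (t + 1) 0 = boxTail n t 0 := by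
  rw [boxTail_eq_add n (t + 1), boxDist_succ_zero, boxTail_succ_succ]
  simp

theorem one_sub_mul_add_mul_le {p q a b a' b' : ℝ} (hp : 0 ≤ p) (hpq : p ≤ q) (hq : q ≤ 1)
    (ha : a ≤ a') (hb : b ≤ b') (hba' : b' ≤ a') :
    (1 - q) * a + q * b ≤ (1 - p) * a' + p * b' := by
  nlinarith [mul_le_mul_of_nonneg_left ha (sub_nonneg.mpr hq),
    mul_le_mul_of_nonneg_left hb (hp.trans hpq),
    mul_nonneg (sub_nonneg.mpr hpq) (sub_nonneg.mpr hba')]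

theorem boxTail_le_boxTail {m n : ℕ} (hm : 0 < m) (hmn : m ≤ n) (t l : ℕ) :
    boxTail m t l ≤ boxTail n t l := by
  induction t generalizing l with
  -- `boxDist n 0` does not depend on `n`
  | zero => rfl
  | succ t ih =>
    cases l with
    | zero => simpa only [boxTail_succ_zero] using ih 0
    | succ l =>
      rcases lt_or_ge l m with hl | hl
      · rw [boxTail_succ_succ, boxTail_succ_succ]
        have hm' : (0 : ℝ) < m := by exact_mod_cast hm
        exact one_sub_mul_add_mul_le (by positivity)
          (div_le_div_of_nonneg_left (Nat.cast_nonneg l) hm' (by exact_mod_cast hmn))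
          (div_le_one_of_le₀ (by exact_mod_cast hl.le) hm'.le)
          (ih l) (ih (l + 1)) (boxTail_succ_le (hm.trans_le hmn) t l)
      · rw [boxTail_eq_zero_of_boxes_lt hm _ (by omega)]
        exact boxTail_nonneg (hm.trans_le hmn) _ _

/-- The number of nonempty boxes is stochastically increasing in the number of boxes. -/
theorem nonempty_boxes_stochastically_increasing (t m n : ℕ)
    (hm : 1 ≤ m) (hmn : m < n) :
    ∀ l : ℕ, (∑' k : ℕ, if l ≤ k then boxDist m t k else 0)
      ≤ ∑' k : ℕ, if l ≤ k then boxDist n t k else 0 :=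
  fun l => boxTail_le_boxTail hm hmn.le t l
end
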